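/- arXiv:1711.02428 — 2 statements merged into one kernel-verified Lean document; each statement's English description precedes it below -/
import Mathlib

section
/- (Relation between metric and combinatorial isoperimetric constants) Assume ℓ*(G) < ∞. Then 2·α_comb(V)/(ℓ*(G)·(1 + α_comb(V))) ≤ α(G); if moreover ℓ_*(G) > 0, then α(G) ≤ 2·α_comb(V)/ℓ_*(G). -/
open scoped Classical ENNReal
open MeasureTheory

noncomputable section

/-- A real function on `[0, L]` which is continuous and piecewise continuously
differentiable: there is a finite partition `0 = x 0 < x 1 < ... < x n = L` such that
on each closed piece the function has a continuous derivative. -/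
def PiecewiseC1 (f : ℝ → ℝ) (L : ℝ) : Prop :=
  ContinuousOn f (Set.Icc 0 L) ∧
  ∃ (n : ℕ) (x : Fin (n + 1) → ℝ), x 0 = 0 ∧ x (Fin.last n) = L ∧ StrictMono x ∧
    ∀ i : Fin n, ∃ g : ℝ → ℝ,
      ContinuousOn g (Set.Icc (x i.castSucc) (x i.succ)) ∧
      ∀ t ∈ Set.Icc (x i.castSucc) (x i.succ),
        HasDerivWithinAt f (g t) (Set.Icc (x i.castSucc) (x i.succ)) t

/-- The underlying (unoriented) simple graph of a set of edges `E` with endpoint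
map `ends : E → V × V`. -/
def graphOf {V E : Type} (ends : E → V × V) : SimpleGraph V :=
  SimpleGraph.fromRel fun u v => ∃ e, ends e = (u, v)

/-- A metric graph: a connected, locally finite, simple combinatorial graph with
countably infinite vertex and edge sets, each edge having a finite positive length.
Each edge carries an (auxiliary) orientation given by `ends`. -/
structure MetricGraph : Type 1 where
  V : Type
  E : Type
  countV : Countable V
  infV : Infinite V
  countE : Countable E
  infE : Infinite E
  ends : E → V × V
  len : E → ℝ
  len_pos : ∀ e, 0 < len e
  no_loops : ∀ e, (ends e).1 ≠ (ends e).2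
  no_multi : Function.Injective fun e => Sym2.mk (ends e)
  locfin : ∀ v, {e | (ends e).1 = v ∨ (ends e).2 = v}.Finite
  conn : (graphOf ends).Connected

namespace MetricGraph

/-- The underlying simple graph. -/
def graph (Γ : MetricGraph) : SimpleGraph Γ.V := graphOf Γ.ends

/-- The star of a vertex: the set of edges incident to it. -/
def star (Γ : MetricGraph) (v : Γ.V) : Set Γ.E :=
  {e | (Γ.ends e).1 = v ∨ (Γ.ends e).2 = v}

/-- Combinatorial degree of a vertex. -/
def degree (Γ : MetricGraph) (v : Γ.V) : ℕ := (Γ.locfin v).toFinset.card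

/-- The vertices of a (finite) subgraph given by a finite set of edges. -/
def vertsOf (Γ : MetricGraph) (F : Finset Γ.E) : Finset Γ.V :=
  F.image (fun e => (Γ.ends e).1) ∪ F.image fun e => (Γ.ends e).2

/-- The degree of a vertex inside the subgraph given by the edge set `F`. -/
def degIn (Γ : MetricGraph) (F : Finset Γ.E) (v : Γ.V) : ℕ :=
  (F.filter fun e => (Γ.ends e).1 = v ∨ (Γ.ends e).2 = v).card

/-- Connectedness of the subgraph spanned by the edge set `F`. -/
def SubConn (Γ : MetricGraph) (F : Finset Γ.E) : Prop :=
  ((SimpleGraph.fromRel fun u v => ∃ e ∈ F, Γ.ends e = (u, v)).induce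
    (↑(Γ.vertsOf F) : Set Γ.V)).Connected

/-- A finite connected subgraph (with at least one edge), given by its edge set. -/
def IsFinSubgraph (Γ : MetricGraph) (F : Finset Γ.E) : Prop :=
  F.Nonempty ∧ Γ.SubConn F

/-- The boundary of a finite subgraph with respect to `Γ`: the vertices whose degree
in the subgraph is strictly smaller than the degree in `Γ`. -/
def bdry (Γ : MetricGraph) (F : Finset Γ.E) : Finset Γ.V :=
  (Γ.vertsOf F).filter fun v => Γ.degIn F v < Γ.degree v

/-- `deg (∂_G G̃)`. -/
def degBdry (Γ : MetricGraph) (F : Finset Γ.E) : ℝ :=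
  ∑ v ∈ Γ.bdry F, (Γ.degIn F v : ℝ)

/-- The total length (Lebesgue measure) of a finite subgraph. -/
def mes (Γ : MetricGraph) (F : Finset Γ.E) : ℝ := ∑ e ∈ F, Γ.len e

/-- The isoperimetric (Cheeger) constant of a metric graph. -/
def alpha (Γ : MetricGraph) : ℝ :=
  sInf {r : ℝ | ∃ F : Finset Γ.E, Γ.IsFinSubgraph F ∧ r = Γ.degBdry F / Γ.mes F}

/-- The isoperimetric constant at infinity, as an element of `[0,∞]`. -/
def alphaEssEnn (Γ : MetricGraph) : ℝ≥0∞ :=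
  ⨆ W : Finset Γ.E, ⨅ (F : Finset Γ.E) (_ : Γ.IsFinSubgraph F ∧ Disjoint F W),
    ENNReal.ofReal (Γ.degBdry F / Γ.mes F)

/-- The vertex weight `m(v) = Σ_{e ∈ E_v} |e|`. -/
def mweight (Γ : MetricGraph) (v : Γ.V) : ℝ :=
  ∑ e ∈ (Γ.locfin v).toFinset, Γ.len e

/-- The set of boundary edges of a vertex set: edges with exactly one endpoint in `X`. -/
def Eb (Γ : MetricGraph) (X : Set Γ.V) : Set Γ.E :=
  {e | Xor' ((Γ.ends e).1 ∈ X) ((Γ.ends e).2 ∈ X)}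

/-- The discrete isoperimetric constant of a vertex set `U`. -/
def alphaD (Γ : MetricGraph) (U : Set Γ.V) : ℝ :=
  sInf {r : ℝ | ∃ X : Finset Γ.V, ↑X ⊆ U ∧ X.Nonempty ∧
    r = ((Γ.Eb ↑X).ncard : ℝ) / ∑ v ∈ X, Γ.mweight v}

/-- The discrete isoperimetric constant at infinity, as an element of `[0,∞]`. -/
def alphaDEssEnn (Γ : MetricGraph) : ℝ≥0∞ :=
  ⨆ X : Finset Γ.V, ENNReal.ofReal (Γ.alphaD (↑X : Set Γ.V)ᶜ)

/-- The combinatorial isoperimetric constant. -/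
def alphaComb (Γ : MetricGraph) : ℝ :=
  sInf {r : ℝ | ∃ X : Finset Γ.V, X.Nonempty ∧
    r = ((Γ.Eb ↑X).ncard : ℝ) / ∑ v ∈ X, (Γ.degree v : ℝ)}

/-- `ℓ*(G) = sup of edge lengths`. -/
def ellSup (Γ : MetricGraph) : ℝ := sSup (Set.range Γ.len)

/-- `ℓ_*(G) = inf of edge lengths`. -/
def ellInf (Γ : MetricGraph) : ℝ := sInf (Set.range Γ.len)

/-- `ℓ*(G)` as an element of `[0,∞]`. -/
def ellSupEnn (Γ : MetricGraph) : ℝ≥0∞ := ⨆ e : Γ.E, ENNReal.ofReal (Γ.len e)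

/-- `ℓ*_ess(G) = inf_F sup_{e ∉ F} |e|` as an element of `[0,∞]`. -/
def ellSupEssEnn (Γ : MetricGraph) : ℝ≥0∞ :=
  ⨅ W : Finset Γ.E, ⨆ e : {e : Γ.E // e ∉ W}, ENNReal.ofReal (Γ.len (e : Γ.E))

/-- Outgoing edges at a vertex (for the fixed orientation). -/
def plusE (Γ : MetricGraph) (v : Γ.V) : Set Γ.E := {e | (Γ.ends e).1 = v}

/-- Incoming edges at a vertex (for the fixed orientation). -/
def minusE (Γ : MetricGraph) (v : Γ.V) : Set Γ.E := {e | (Γ.ends e).2 = v}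

/-- The curvature `K(v) = ((#E_v⁺ − #E_v⁻)/#E_v⁺) · inf_{e ∈ E_v⁺} 1/|e|`. -/
def Kcurv (Γ : MetricGraph) (v : Γ.V) : ℝ :=
  (((Γ.plusE v).ncard : ℝ) - ((Γ.minusE v).ncard : ℝ)) / ((Γ.plusE v).ncard : ℝ) *
    sInf ((fun e => 1 / Γ.len e) '' Γ.plusE v)

/-- The combinatorial curvature `K_comb(v) = 1 − #E_v⁻/#E_v⁺`. -/
def Kcomb (Γ : MetricGraph) (v : Γ.V) : ℝ :=
  1 - ((Γ.minusE v).ncard : ℝ) / ((Γ.plusE v).ncard : ℝ)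

/-- `liminf_{v ∈ V} K(v) = sup over finite W of inf_{v ∉ W} K(v)`, in `[0,∞]`. -/
def KcurvEssEnn (Γ : MetricGraph) : ℝ≥0∞ :=
  ⨆ W : Finset Γ.V, ⨅ v : {v : Γ.V // v ∉ W}, ENNReal.ofReal (Γ.Kcurv (v : Γ.V))

/-- `liminf_{v ∈ V} K_comb(v) = sup over finite W of inf_{v ∉ W} K_comb(v)`. -/
def KcombLiminf (Γ : MetricGraph) : ℝ :=
  sSup (Set.range fun W : Finset Γ.V => sInf (Γ.Kcomb '' (↑W : Set Γ.V)ᶜ))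

/-- The value of an edgewise function at an endpoint of an edge. -/
def endVal (Γ : MetricGraph) (f : Γ.E → ℝ → ℝ) (e : Γ.E) (v : Γ.V) : ℝ :=
  if (Γ.ends e).1 = v then f e 0 else f e (Γ.len e)

/-- A test function on the metric graph `Γ`: a family of continuous, piecewise `C¹`
functions on the edges, matching at the vertices, vanishing on all but finitely
many edges. -/
structure TestFun (Γ : MetricGraph) where
  f : Γ.E → ℝ → ℝ
  piecewise : ∀ e, PiecewiseC1 (f e) (Γ.len e)
  vertexCont : ∀ e e' : Γ.E, ∀ v : Γ.V, e ∈ Γ.star v → e' ∈ Γ.star v →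
    Γ.endVal f e v = Γ.endVal f e' v
  finSupp : {e : Γ.E | ∃ x ∈ Set.Icc 0 (Γ.len e), f e x ≠ 0}.Finite

/-- `‖f‖² = Σ_e ∫₀^{|e|} f_e(x)² dx`. -/
def TestFun.normSq {Γ : MetricGraph} (φ : TestFun Γ) : ℝ :=
  ∑ᶠ e : Γ.E, ∫ x in (0:ℝ)..Γ.len e, (φ.f e x) ^ 2

/-- `‖f′‖² = Σ_e ∫₀^{|e|} f_e′(x)² dx`. -/
def TestFun.energySq {Γ : MetricGraph} (φ : TestFun Γ) : ℝ :=
  ∑ᶠ e : Γ.E, ∫ x in (0:ℝ)..Γ.len e, (deriv (φ.f e) x) ^ 2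

/-- A test function is nonzero if it does not vanish identically on the graph. -/
def TestFun.Nonzero {Γ : MetricGraph} (φ : TestFun Γ) : Prop :=
  ∃ e : Γ.E, ∃ x ∈ Set.Icc 0 (Γ.len e), φ.f e x ≠ 0

/-- The bottom of the spectrum of the Kirchhoff Laplacian, via the variational
(Rayleigh quotient) characterization. -/
def lambda0 (Γ : MetricGraph) : ℝ :=
  sInf {r : ℝ | ∃ φ : TestFun Γ, φ.Nonzero ∧ r = φ.energySq / φ.normSq}

end MetricGraph

/-- A weighted graph `(V, m, b)`: a connected, locally finite, simple combinatorial
graph with countably infinite vertex and edge sets, an edge weight `b` and a vertex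
weight `m`. -/
structure WeightedGraph : Type 1 where
  V : Type
  E : Type
  countV : Countable V
  infV : Infinite V
  countE : Countable E
  infE : Infinite E
  ends : E → V × V
  no_loops : ∀ e, (ends e).1 ≠ (ends e).2
  no_multi : Function.Injective fun e => Sym2.mk (ends e)
  locfin : ∀ v, {e | (ends e).1 = v ∨ (ends e).2 = v}.Finite
  conn : (graphOf ends).Connected
  b : E → ℝ
  b_pos : ∀ e, 0 < b e
  m : V → ℝ
  m_pos : ∀ v, 0 < m v

namespace WeightedGraph

/-- An edge weight `d` is intrinsic if `Σ_{e ∈ E_v} d(e)² b(e) ≤ m(v)` for all `v`. -/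
def Intrinsic (Γ : WeightedGraph) (d : Γ.E → ℝ) : Prop :=
  ∀ v, ∑ e ∈ (Γ.locfin v).toFinset, d e ^ 2 * Γ.b e ≤ Γ.m v

/-- The boundary edges of a vertex set: edges with exactly one endpoint in `X`. -/
def Eb (Γ : WeightedGraph) (X : Set Γ.V) : Set Γ.E :=
  {e | Xor' ((Γ.ends e).1 ∈ X) ((Γ.ends e).2 ∈ X)}

/-- The discrete isoperimetric constant `α_d(U)` with respect to the weight `d`. -/
def alphaD (Γ : WeightedGraph) (d : Γ.E → ℝ) (U : Set Γ.V) : ℝ :=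
  sInf {r : ℝ | ∃ X : Finset Γ.V, ↑X ⊆ U ∧ X.Nonempty ∧
    r = (∑ᶠ e ∈ Γ.Eb ↑X, d e * Γ.b e) / ∑ v ∈ X, Γ.m v}

/-- The discrete isoperimetric constant at infinity, in `[0,∞]`. -/
def alphaDEssEnn (Γ : WeightedGraph) (d : Γ.E → ℝ) : ℝ≥0∞ :=
  ⨆ X : Finset Γ.V, ENNReal.ofReal (Γ.alphaD d (↑X : Set Γ.V)ᶜ)

/-- The energy form `Q(u) = Σ_e b(e) (u(e_i) − u(e_0))²`. -/
def Q (Γ : WeightedGraph) (u : Γ.V → ℝ) : ℝ :=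
  ∑ᶠ e : Γ.E, Γ.b e * (u (Γ.ends e).2 - u (Γ.ends e).1) ^ 2

/-- The squared norm `Σ_v m(v) u(v)²`. -/
def normSqD (Γ : WeightedGraph) (u : Γ.V → ℝ) : ℝ :=
  ∑ᶠ v : Γ.V, Γ.m v * u v ^ 2

/-- The bottom of the spectrum of the Friedrichs extension of the weighted Laplacian,
via the variational characterization over finitely supported functions. -/
def lambda0 (Γ : WeightedGraph) : ℝ :=
  sInf {r : ℝ | ∃ u : Γ.V → ℝ, (Function.support u).Finite ∧ u ≠ 0 ∧
    r = Γ.Q u / Γ.normSqD u}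

/-- The bottom of the essential spectrum of the Friedrichs extension, via Glazman's
decomposition principle, in `[0,∞]`. -/
def lambda0EssEnn (Γ : WeightedGraph) : ℝ≥0∞ :=
  ⨆ X : Finset Γ.V, ⨅ (u : Γ.V → ℝ)
    (_ : (Function.support u).Finite ∧ u ≠ 0 ∧ ∀ v ∈ X, u v = 0),
      ENNReal.ofReal (Γ.Q u / Γ.normSqD u)

end WeightedGraph

end

/-!
For the lower bound take a finite subgraph with boundary `∂` and interior `I` (the other
vertices, where the subgraph has full degree). The handshake lemma gives
`deg I + deg ∂ = 2 #edges`, and every edge leaving `I` is an edge of the subgraph ending in `∂`,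
so `α_comb deg I ≤ #E_b(I) ≤ deg ∂`; with `mes ≤ ℓ* #edges` this yields the bound.

For the upper bound, a finite vertex set may be replaced by a connected subset `Y` with no
larger combinatorial ratio. The star of all edges at `Y` is then a finite connected subgraph
with `deg ∂ ≤ #E_b(Y)` and `mes ≥ ℓ_* deg Y / 2`.
-/

theorem min_div_le_add_div_add {α : Type*} [Field α] [LinearOrder α] [IsStrictOrderedRing α]
    {a b c d : α} (hb : 0 < b) (hd : 0 < d) : min (a / b) (c / d) ≤ (a + c) / (b + d) := by
  rw [le_div_iff₀ (add_pos hb hd)]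
  rcases le_total (a / b) (c / d) with h | h
  · rw [min_eq_left h]
    have : a / b * d ≤ c := (le_div_iff₀ hd).mp h
    have : a / b * b = a := div_mul_cancel₀ a hb.ne'
    nlinarith
  · rw [min_eq_right h]
    have : c / d * b ≤ a := (le_div_iff₀ hb).mp h
    have : c / d * d = c := div_mul_cancel₀ c hd.ne'
    nlinarith

theorem SimpleGraph.exists_closed_ssubset_of_not_connected_induce {V : Type*}
    {G : SimpleGraph V} {X : Finset V} (hX : X.Nonempty)
    (h : ¬ (G.induce (X : Set V)).Connected) :
    ∃ C ⊂ X, C.Nonempty ∧ ∀ u ∈ C, ∀ v ∈ X, G.Adj u v → v ∈ C := by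
  have : Nonempty (X : Set V) := hX.coe_sort
  obtain ⟨⟨a, ha⟩, ⟨b, hb⟩, hab⟩ : ∃ a b, ¬ (G.induce (X : Set V)).Reachable a b := by
    by_contra! hall
    exact h ⟨fun a b => hall a b⟩
  set C := X.filter fun w => ∃ hw : w ∈ X, (G.induce (X : Set V)).Reachable ⟨a, ha⟩ ⟨w, hw⟩
  refine ⟨C, ?_, ⟨a, ?_⟩, ?_⟩
  · refine Finset.ssubset_iff_subset_ne.mpr ⟨Finset.filter_subset _ _, fun hCX => hab ?_⟩
    have hbC : b ∈ C := by rw [hCX]; exact hb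
    obtain ⟨-, _, hreach⟩ := Finset.mem_filter.mp hbC
    exact hreach
  · exact Finset.mem_filter.mpr ⟨ha, ha, .refl _⟩
  · intro u hu v hv huv
    obtain ⟨-, hu', hreach⟩ := Finset.mem_filter.mp hu
    exact Finset.mem_filter.mpr ⟨hv, hv, hreach.trans (SimpleGraph.Adj.reachable
      (G := G.induce (X : Set V)) (u := ⟨u, hu'⟩) (v := ⟨v, hv⟩) huv)⟩

namespace MetricGraph

variable (Γ : MetricGraph)

theorem star_nonempty (v : Γ.V) : (Γ.star v).Nonempty := by
  have := Γ.infV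
  obtain ⟨w, hw⟩ := exists_ne v
  obtain ⟨p⟩ := Γ.conn v w
  cases p with
  | nil => exact absurd rfl hw
  | cons hadj _ =>
    obtain ⟨-, ⟨e, he⟩ | ⟨e, he⟩⟩ := SimpleGraph.fromRel_adj _ _ _ |>.mp hadj
    · exact ⟨e, Or.inl (congrArg Prod.fst he)⟩
    · exact ⟨e, Or.inr (congrArg Prod.snd he)⟩

theorem degree_pos (v : Γ.V) : 0 < Γ.degree v := by
  obtain ⟨e, he⟩ := Γ.star_nonempty v
  exact Finset.card_pos.mpr ⟨e, (Γ.locfin v).mem_toFinset.mpr he⟩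

theorem sum_degree_pos {X : Finset Γ.V} (hX : X.Nonempty) : 0 < ∑ v ∈ X, (Γ.degree v : ℝ) :=
  Finset.sum_pos (fun v _ => by exact_mod_cast Γ.degree_pos v) hX

theorem card_filter_incident (W : Finset Γ.V) (e : Γ.E) :
    (W.filter fun v => (Γ.ends e).1 = v ∨ (Γ.ends e).2 = v).card =
      (if (Γ.ends e).1 ∈ W then 1 else 0) + (if (Γ.ends e).2 ∈ W then 1 else 0) := by
  rw [Finset.filter_or, Finset.card_union_of_disjoint, Finset.filter_eq, Finset.filter_eq]
  · split_ifs <;> rfl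
  · simp only [Finset.disjoint_filter]
    rintro v - rfl
    exact (Γ.no_loops e).symm

theorem sum_degIn_eq (F : Finset Γ.E) (W : Finset Γ.V) :
    ∑ v ∈ W, Γ.degIn F v = ∑ e ∈ F,
      ((if (Γ.ends e).1 ∈ W then 1 else 0) + (if (Γ.ends e).2 ∈ W then 1 else 0)) := by
  simp only [degIn, Finset.card_filter, ← Γ.card_filter_incident]
  exact Finset.sum_comm

variable {Γ} in
theorem mem_vertsOf {F : Finset Γ.E} {v : Γ.V} :
    v ∈ Γ.vertsOf F ↔ ∃ e ∈ F, (Γ.ends e).1 = v ∨ (Γ.ends e).2 = v := by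
  simp only [vertsOf, Finset.mem_union, Finset.mem_image]
  grind

theorem sum_vertsOf_degIn (F : Finset Γ.E) : ∑ v ∈ Γ.vertsOf F, Γ.degIn F v = 2 * F.card := by
  rw [Γ.sum_degIn_eq, Finset.card_eq_sum_ones, Finset.mul_sum]
  refine Finset.sum_congr rfl fun e he => ?_
  have h₁ : (Γ.ends e).1 ∈ Γ.vertsOf F := mem_vertsOf.mpr ⟨e, he, .inl rfl⟩
  have h₂ : (Γ.ends e).2 ∈ Γ.vertsOf F := mem_vertsOf.mpr ⟨e, he, .inr rfl⟩
  simp [h₁, h₂]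

theorem degIn_le_degree (F : Finset Γ.E) (v : Γ.V) : Γ.degIn F v ≤ Γ.degree v :=
  Finset.card_le_card fun _ he => (Γ.locfin v).mem_toFinset.mpr (Finset.mem_filter.mp he).2

variable {Γ} in
theorem mem_of_degIn_eq_degree {F : Finset Γ.E} {v : Γ.V} (hv : Γ.degIn F v = Γ.degree v)
    {e : Γ.E} (he : (Γ.ends e).1 = v ∨ (Γ.ends e).2 = v) : e ∈ F := by
  have hsub : F.filter (fun e => (Γ.ends e).1 = v ∨ (Γ.ends e).2 = v) ⊆ (Γ.locfin v).toFinset :=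
    fun _ he => (Γ.locfin v).mem_toFinset.mpr (Finset.mem_filter.mp he).2
  have heq := Finset.eq_of_subset_of_card_le hsub hv.ge
  have : e ∈ F.filter (fun e => (Γ.ends e).1 = v ∨ (Γ.ends e).2 = v) :=
    heq ▸ (Γ.locfin v).mem_toFinset.mpr he
  exact (Finset.mem_filter.mp this).1

variable {Γ} in
theorem degIn_eq_degree_of_notMem_bdry {F : Finset Γ.E} {v : Γ.V} (hv : v ∈ Γ.vertsOf F)
    (hvb : v ∉ Γ.bdry F) : Γ.degIn F v = Γ.degree v :=
  (Γ.degIn_le_degree F v).antisymm <| not_lt.mp fun hlt => hvb (Finset.mem_filter.mpr ⟨hv, hlt⟩)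

variable {Γ} in
theorem mem_Eb {X : Set Γ.V} {e : Γ.E} :
    e ∈ Γ.Eb X ↔ (Γ.ends e).1 ∈ X ∧ (Γ.ends e).2 ∉ X ∨ (Γ.ends e).2 ∈ X ∧ (Γ.ends e).1 ∉ X :=
  Iff.rfl

/-- The edges leaving the interior of a finite subgraph are edges of the subgraph ending
at a boundary vertex. -/
theorem ncard_Eb_interior_le (F : Finset Γ.E) :
    (Γ.Eb ↑(Γ.vertsOf F \ Γ.bdry F)).ncard ≤ ∑ v ∈ Γ.bdry F, Γ.degIn F v := by
  set I := Γ.vertsOf F \ Γ.bdry F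
  have hfull : ∀ v ∈ I, Γ.degIn F v = Γ.degree v := fun v hv =>
    degIn_eq_degree_of_notMem_bdry (Finset.mem_sdiff.mp hv).1 (Finset.mem_sdiff.mp hv).2
  have hsub : Γ.Eb ↑I ⊆ ↑F := by
    rintro e (⟨h, -⟩ | ⟨h, -⟩)
    · exact mem_of_degIn_eq_degree (hfull _ h) (.inl rfl)
    · exact mem_of_degIn_eq_degree (hfull _ h) (.inr rfl)
  have hEb : Γ.Eb ↑I = ↑(F.filter (· ∈ Γ.Eb ↑I)) := by
    ext e
    simpa using fun he => hsub he
  rw [hEb, Set.ncard_coe_finset, Finset.card_filter, Γ.sum_degIn_eq]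
  refine Finset.sum_le_sum fun e he => ?_
  have h₁ : (Γ.ends e).1 ∈ Γ.vertsOf F := mem_vertsOf.mpr ⟨e, he, .inl rfl⟩
  have h₂ : (Γ.ends e).2 ∈ Γ.vertsOf F := mem_vertsOf.mpr ⟨e, he, .inr rfl⟩
  by_cases b₁ : (Γ.ends e).1 ∈ Γ.bdry F <;> by_cases b₂ : (Γ.ends e).2 ∈ Γ.bdry F <;>
    simp [I, mem_Eb, h₁, h₂, b₁, b₂]

theorem alphaComb_nonneg : 0 ≤ Γ.alphaComb :=
  Real.sInf_nonneg fun _ ⟨_, _, hr⟩ => hr ▸ by positivity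

theorem alphaComb_mul_sum_degree_le (X : Finset Γ.V) :
    Γ.alphaComb * ∑ v ∈ X, (Γ.degree v : ℝ) ≤ (Γ.Eb ↑X).ncard := by
  rcases X.eq_empty_or_nonempty with rfl | hX
  · simp
  rw [← le_div_iff₀ (Γ.sum_degree_pos hX)]
  exact csInf_le ⟨0, fun _ ⟨_, _, hr⟩ => hr ▸ by positivity⟩ ⟨X, hX, rfl⟩

theorem two_mul_alphaComb_mul_card_le (F : Finset Γ.E) :
    2 * Γ.alphaComb * F.card ≤ (1 + Γ.alphaComb) * Γ.degBdry F := by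
  set I := Γ.vertsOf F \ Γ.bdry F
  have hdeg : ∑ v ∈ I, (Γ.degree v : ℝ) + Γ.degBdry F = 2 * F.card := by
    have hsplit := Finset.sum_sdiff (f := Γ.degIn F)
      (show Γ.bdry F ⊆ Γ.vertsOf F from Finset.filter_subset _ _)
    have hI : ∑ v ∈ I, Γ.degIn F v = ∑ v ∈ I, Γ.degree v := Finset.sum_congr rfl fun v hv =>
      degIn_eq_degree_of_notMem_bdry (Finset.mem_sdiff.mp hv).1 (Finset.mem_sdiff.mp hv).2
    rw [hI, Γ.sum_vertsOf_degIn] at hsplit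
    rw [degBdry]
    exact_mod_cast hsplit
  have hiso : Γ.alphaComb * ∑ v ∈ I, (Γ.degree v : ℝ) ≤ Γ.degBdry F :=
    (Γ.alphaComb_mul_sum_degree_le I).trans <| by
      rw [degBdry, ← Nat.cast_sum]
      exact_mod_cast Γ.ncard_Eb_interior_le F
  rw [eq_sub_of_add_eq hdeg] at hiso
  linarith

theorem mes_pos {F : Finset Γ.E} (hF : F.Nonempty) : 0 < Γ.mes F :=
  Finset.sum_pos (fun e _ => Γ.len_pos e) hF

theorem mes_le_ellSup_mul_card (h : BddAbove (Set.range Γ.len)) (F : Finset Γ.E) :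
    Γ.mes F ≤ Γ.ellSup * F.card := by
  rw [mul_comm, ← nsmul_eq_mul, ← Finset.sum_const]
  exact Finset.sum_le_sum fun e _ => le_csSup h (Set.mem_range_self e)

theorem ellInf_le_len (e : Γ.E) : Γ.ellInf ≤ Γ.len e :=
  csInf_le ⟨0, fun _ ⟨e', he'⟩ => he' ▸ (Γ.len_pos e').le⟩ (Set.mem_range_self e)

theorem ellInf_mul_card_le_mes (F : Finset Γ.E) : Γ.ellInf * F.card ≤ Γ.mes F := by
  rw [mul_comm, ← nsmul_eq_mul, ← Finset.sum_const]
  exact Finset.sum_le_sum fun e _ => Γ.ellInf_le_len e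

theorem alpha_le_degBdry_div_mes {F : Finset Γ.E} (hF : Γ.IsFinSubgraph F) :
    Γ.alpha ≤ Γ.degBdry F / Γ.mes F :=
  csInf_le ⟨0, fun _ ⟨_, hG, hr⟩ => hr ▸ div_nonneg
    (Finset.sum_nonneg fun _ _ => by positivity) (Γ.mes_pos hG.1).le⟩ ⟨F, hF, rfl⟩

theorem le_degBdry_div_mes (h : BddAbove (Set.range Γ.len)) {F : Finset Γ.E}
    (hF : F.Nonempty) :
    2 * Γ.alphaComb / (Γ.ellSup * (1 + Γ.alphaComb)) ≤ Γ.degBdry F / Γ.mes F := by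
  obtain ⟨e, -⟩ := id hF
  have hℓ : 0 < Γ.ellSup := (Γ.len_pos e).trans_le (le_csSup h (Set.mem_range_self e))
  have hα := Γ.alphaComb_nonneg
  rw [div_le_div_iff₀ (by positivity) (Γ.mes_pos hF)]
  calc 2 * Γ.alphaComb * Γ.mes F ≤ 2 * Γ.alphaComb * (Γ.ellSup * F.card) := by
        gcongr; exact Γ.mes_le_ellSup_mul_card h F
    _ = Γ.ellSup * (2 * Γ.alphaComb * F.card) := by ring
    _ ≤ Γ.ellSup * ((1 + Γ.alphaComb) * Γ.degBdry F) :=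
        mul_le_mul_of_nonneg_left (Γ.two_mul_alphaComb_mul_card_le F) hℓ.le
    _ = Γ.degBdry F * (Γ.ellSup * (1 + Γ.alphaComb)) := by ring

noncomputable def starFinset (Y : Finset Γ.V) : Finset Γ.E :=
  Y.biUnion fun v => (Γ.locfin v).toFinset

def spannedGraph (F : Finset Γ.E) : SimpleGraph Γ.V :=
  SimpleGraph.fromRel fun u v => ∃ e ∈ F, Γ.ends e = (u, v)

noncomputable def combRatio (X : Finset Γ.V) : ℝ :=
  (Γ.Eb ↑X).ncard / ∑ v ∈ X, (Γ.degree v : ℝ)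

variable {Γ}

theorem mem_starFinset {Y : Finset Γ.V} {e : Γ.E} :
    e ∈ Γ.starFinset Y ↔ ∃ y ∈ Y, (Γ.ends e).1 = y ∨ (Γ.ends e).2 = y := by
  simp [starFinset]

theorem Eb_subset_starFinset (Y : Finset Γ.V) : Γ.Eb ↑Y ⊆ ↑(Γ.starFinset Y) := by
  rintro e (⟨h, -⟩ | ⟨h, -⟩)
  · exact mem_starFinset.mpr ⟨_, h, .inl rfl⟩
  · exact mem_starFinset.mpr ⟨_, h, .inr rfl⟩

theorem degIn_starFinset {Y : Finset Γ.V} {y : Γ.V} (hy : y ∈ Y) :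
    Γ.degIn (Γ.starFinset Y) y = Γ.degree y := by
  refine congrArg Finset.card (Finset.ext fun e => ?_)
  simp only [Finset.mem_filter, Set.Finite.mem_toFinset, mem_starFinset]
  exact ⟨And.right, fun he => ⟨⟨y, hy, he⟩, he⟩⟩

theorem notMem_bdry_starFinset {Y : Finset Γ.V} {y : Γ.V} (hy : y ∈ Y) :
    y ∉ Γ.bdry (Γ.starFinset Y) := fun hb =>
  (Finset.mem_filter.mp hb).2.ne (degIn_starFinset hy)

theorem graph_adj_ends (e : Γ.E) : Γ.graph.Adj (Γ.ends e).1 (Γ.ends e).2 :=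
  (SimpleGraph.fromRel_adj _ _ _).mpr ⟨Γ.no_loops e, .inl ⟨e, rfl⟩⟩

theorem spannedGraph_adj_of_incident {F : Finset Γ.E} {e : Γ.E} (he : e ∈ F) {x y : Γ.V}
    (hx : (Γ.ends e).1 = x ∨ (Γ.ends e).2 = x) (hy : (Γ.ends e).1 = y ∨ (Γ.ends e).2 = y)
    (hxy : x ≠ y) : (Γ.spannedGraph F).Adj x y := by
  refine (SimpleGraph.fromRel_adj _ _ _).mpr ⟨hxy, ?_⟩
  rcases hx with rfl | rfl <;> rcases hy with rfl | rfl
  · exact absurd rfl hxy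
  · exact .inl ⟨e, he, rfl⟩
  · exact .inr ⟨e, he, rfl⟩
  · exact absurd rfl hxy

theorem subConn_starFinset {Y : Finset Γ.V} (hY : (Γ.graph.induce (Y : Set Γ.V)).Connected) :
    Γ.SubConn (Γ.starFinset Y) := by
  set F := Γ.starFinset Y
  have hYF : ((Γ.spannedGraph F).induce (Y : Set Γ.V)).Connected := by
    refine hY.mono fun a b hab => ?_
    obtain ⟨hne, ⟨e, he⟩ | ⟨e, he⟩⟩ :=
      (SimpleGraph.fromRel_adj _ _ _).mp (SimpleGraph.comap_adj.mp hab)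
    · have ha := congrArg Prod.fst he
      exact spannedGraph_adj_of_incident (mem_starFinset.mpr ⟨a, a.2, .inl ha⟩)
        (.inl ha) (.inr (congrArg Prod.snd he)) hne
    · have ha := congrArg Prod.snd he
      exact spannedGraph_adj_of_incident (mem_starFinset.mpr ⟨a, a.2, .inr ha⟩)
        (.inr ha) (.inl (congrArg Prod.fst he)) hne
  have hYsub : (Y : Set Γ.V) ⊆ ↑(Γ.vertsOf F) := fun y hy => by
    obtain ⟨e, he⟩ := Γ.star_nonempty y
    exact mem_vertsOf.mpr ⟨e, mem_starFinset.mpr ⟨y, hy, he⟩, he⟩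
  obtain ⟨⟨u, hu⟩⟩ := hY.nonempty
  refine SimpleGraph.induce_connected_of_patches u (hYsub hu) fun {v} hv => ?_
  obtain ⟨e, heF, hve⟩ := mem_vertsOf.mp hv
  obtain ⟨y, hy, hye⟩ := mem_starFinset.mp heF
  by_cases hvy : v = y
  · subst hvy
    exact ⟨Y, hYsub, hu, hy, hYF.preconnected _ _⟩
  · have hpair := SimpleGraph.induce_pair_connected_of_adj
      (spannedGraph_adj_of_incident heF hye hve (Ne.symm hvy))
    refine ⟨Y ∪ {y, v}, Set.union_subset hYsub ?_, .inl hu, .inr (by simp),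
      (SimpleGraph.induce_union_connected hYF.preconnected hpair.preconnected
        ⟨y, hy, by simp⟩).preconnected _ _⟩
    simp [Set.insert_subset_iff, hv, hYsub hy]

theorem isFinSubgraph_starFinset {Y : Finset Γ.V}
    (hY : (Γ.graph.induce (Y : Set Γ.V)).Connected) :
    Γ.IsFinSubgraph (Γ.starFinset Y) := by
  obtain ⟨⟨y, hy⟩⟩ := hY.nonempty
  obtain ⟨e, he⟩ := Γ.star_nonempty y
  exact ⟨⟨e, mem_starFinset.mpr ⟨y, hy, he⟩⟩, subConn_starFinset hY⟩

theorem ncard_Eb_eq_card_filter (Y : Finset Γ.V) :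
    (Γ.Eb ↑Y).ncard = ((Γ.starFinset Y).filter (· ∈ Γ.Eb ↑Y)).card := by
  rw [← Set.ncard_coe_finset, Finset.coe_filter]
  exact congrArg Set.ncard <| Set.ext fun e => ⟨fun h => ⟨Eb_subset_starFinset Y h, h⟩, And.right⟩

/-- Every edge at a boundary vertex of the star of `Y` leaves `Y`, and has only one endpoint
outside `Y`. -/
theorem degBdry_starFinset_le (Y : Finset Γ.V) :
    Γ.degBdry (Γ.starFinset Y) ≤ (Γ.Eb ↑Y).ncard := by
  rw [degBdry, ← Nat.cast_sum, ncard_Eb_eq_card_filter, Finset.card_filter, Γ.sum_degIn_eq]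
  refine Nat.cast_le.mpr (Finset.sum_le_sum fun e he => ?_)
  obtain ⟨y, hy, hye⟩ := mem_starFinset.mp he
  have hyb := notMem_bdry_starFinset hy
  rcases hye with rfl | rfl
  · by_cases h₂ : (Γ.ends e).2 ∈ Y
    · simp [mem_Eb, hy, h₂, hyb, notMem_bdry_starFinset h₂]
    · by_cases b₂ : (Γ.ends e).2 ∈ Γ.bdry (Γ.starFinset Y) <;> simp [mem_Eb, hy, h₂, hyb, b₂]
  · by_cases h₁ : (Γ.ends e).1 ∈ Y
    · simp [mem_Eb, hy, h₁, hyb, notMem_bdry_starFinset h₁]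
    · by_cases b₁ : (Γ.ends e).1 ∈ Γ.bdry (Γ.starFinset Y) <;> simp [mem_Eb, hy, h₁, hyb, b₁]

theorem sum_degree_le_two_mul_card_starFinset (Y : Finset Γ.V) :
    ∑ v ∈ Y, (Γ.degree v : ℝ) ≤ 2 * (Γ.starFinset Y).card := by
  have : ∑ v ∈ Y, Γ.degree v ≤ 2 * (Γ.starFinset Y).card := by
    rw [← Finset.sum_congr rfl fun v hv => degIn_starFinset hv, Γ.sum_degIn_eq,
      Finset.card_eq_sum_ones, Finset.mul_sum]
    exact Finset.sum_le_sum fun e _ => by split_ifs <;> omega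
  exact_mod_cast this

theorem alpha_le_of_connected (hℓ : 0 < Γ.ellInf) {Y : Finset Γ.V}
    (hY : (Γ.graph.induce (Y : Set Γ.V)).Connected) :
    Γ.alpha ≤ 2 * Γ.combRatio Y / Γ.ellInf := by
  set F := Γ.starFinset Y
  have hF := isFinSubgraph_starFinset hY
  have hYne : Y.Nonempty := by
    obtain ⟨⟨y, hy⟩⟩ := hY.nonempty
    exact ⟨y, hy⟩
  have hmes : Γ.ellInf * (∑ v ∈ Y, (Γ.degree v : ℝ)) / 2 ≤ Γ.mes F := by
    refine le_trans ?_ (Γ.ellInf_mul_card_le_mes F)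
    rw [mul_div_assoc]
    gcongr
    linarith [sum_degree_le_two_mul_card_starFinset (Γ := Γ) Y]
  calc Γ.alpha ≤ Γ.degBdry F / Γ.mes F := Γ.alpha_le_degBdry_div_mes hF
    _ ≤ (Γ.Eb ↑Y).ncard / (Γ.ellInf * (∑ v ∈ Y, (Γ.degree v : ℝ)) / 2) :=
        div_le_div₀ (by positivity) (degBdry_starFinset_le Y)
          (by have := Γ.sum_degree_pos hYne; positivity) hmes
    _ = 2 * Γ.combRatio Y / Γ.ellInf := by
        have := (Γ.sum_degree_pos hYne).ne'
        rw [combRatio]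
        field_simp

theorem ncard_Eb_eq_add {C X : Finset Γ.V} (hCX : C ⊆ X)
    (hC : ∀ u ∈ C, ∀ v ∈ X, Γ.graph.Adj u v → v ∈ C) :
    (Γ.Eb ↑X).ncard = (Γ.Eb ↑C).ncard + (Γ.Eb ↑(X \ C)).ncard := by
  have hends : ∀ e, ((Γ.ends e).1 ∈ C → (Γ.ends e).1 ∈ X) ∧
      ((Γ.ends e).2 ∈ C → (Γ.ends e).2 ∈ X) ∧
      ((Γ.ends e).1 ∈ C → (Γ.ends e).2 ∈ X → (Γ.ends e).2 ∈ C) ∧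
      ((Γ.ends e).2 ∈ C → (Γ.ends e).1 ∈ X → (Γ.ends e).1 ∈ C) := fun e =>
    ⟨@hCX _, @hCX _, fun h h' => hC _ h _ h' (graph_adj_ends e),
      fun h h' => hC _ h _ h' (graph_adj_ends e).symm⟩
  have hsplit : Γ.Eb ↑X = Γ.Eb ↑C ∪ Γ.Eb ↑(X \ C) := by
    ext e
    have := hends e
    simp only [Set.mem_union, mem_Eb, Finset.coe_sdiff, Set.mem_sdiff, Finset.mem_coe]
    tauto
  have hdisj : Disjoint (Γ.Eb ↑C) (Γ.Eb ↑(X \ C)) := by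
    refine Set.disjoint_left.mpr fun e h h' => ?_
    have := hends e
    simp only [mem_Eb, Finset.coe_sdiff, Set.mem_sdiff, Finset.mem_coe] at h h'
    tauto
  rw [hsplit, Set.ncard_union_eq hdisj
    ((Finset.finite_toSet _).subset (Eb_subset_starFinset C))
    ((Finset.finite_toSet _).subset (Eb_subset_starFinset _))]

/-- Splitting `X` along a union of components of its induced graph makes `combRatio X` a
mediant of the two parts, so one of them has no larger ratio. -/
theorem exists_connected_subset_combRatio_le {X : Finset Γ.V} (hX : X.Nonempty) :
    ∃ Y ⊆ X, (Γ.graph.induce (Y : Set Γ.V)).Connected ∧ Γ.combRatio Y ≤ Γ.combRatio X := by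
  induction X using Finset.strongInduction with
  | H X ih =>
  by_cases hconn : (Γ.graph.induce (X : Set Γ.V)).Connected
  · exact ⟨X, subset_rfl, hconn, le_rfl⟩
  obtain ⟨C, hCX, hCne, hC⟩ := SimpleGraph.exists_closed_ssubset_of_not_connected_induce hX hconn
  have hDne : (X \ C).Nonempty := Finset.sdiff_nonempty.mpr hCX.2
  have hmediant : min (Γ.combRatio C) (Γ.combRatio (X \ C)) ≤ Γ.combRatio X := by
    have := min_div_le_add_div_add (a := ((Γ.Eb ↑C).ncard : ℝ))
      (c := ((Γ.Eb ↑(X \ C)).ncard : ℝ)) (Γ.sum_degree_pos hCne) (Γ.sum_degree_pos hDne)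
    rwa [← Nat.cast_add, ← ncard_Eb_eq_add hCX.subset hC, add_comm,
      Finset.sum_sdiff hCX.subset] at this
  rcases min_le_iff.mp hmediant with h | h
  · obtain ⟨Y, hYC, hY, hYr⟩ := ih C hCX hCne
    exact ⟨Y, hYC.trans hCX.subset, hY, hYr.trans h⟩
  · obtain ⟨Y, hYD, hY, hYr⟩ := ih (X \ C) (Finset.sdiff_ssubset hCX.subset hCne) hDne
    exact ⟨Y, hYD.trans Finset.sdiff_subset, hY, hYr.trans h⟩

end MetricGraph

/-- **Relation between metric and combinatorial isoperimetric constants.**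
If `ℓ*(G) < ∞`, then `2 α_comb(V)/(ℓ*(G)(1 + α_comb(V))) ≤ α(G)`; if moreover
`ℓ_*(G) > 0`, then `α(G) ≤ 2 α_comb(V)/ℓ_*(G)`. -/
theorem alpha_comb_bounds (Γ : MetricGraph) (h : BddAbove (Set.range Γ.len)) :
    2 * Γ.alphaComb / (Γ.ellSup * (1 + Γ.alphaComb)) ≤ Γ.alpha ∧
    (0 < Γ.ellInf → Γ.alpha ≤ 2 * Γ.alphaComb / Γ.ellInf) := by
  obtain ⟨v⟩ : Nonempty Γ.V := by have := Γ.infV; infer_instance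
  have hv : (Γ.graph.induce (({v} : Finset Γ.V) : Set Γ.V)).Connected := by
    rw [Finset.coe_singleton]
    exact SimpleGraph.Connected.of_subsingleton
  refine ⟨le_csInf ⟨_, _, MetricGraph.isFinSubgraph_starFinset hv, rfl⟩
    fun _ ⟨F, hF, hr⟩ => hr ▸ Γ.le_degBdry_div_mes h hF.1, fun hℓ => ?_⟩
  have hcomb : Γ.alpha * Γ.ellInf / 2 ≤ Γ.alphaComb :=
    le_csInf ⟨_, {v}, Finset.singleton_nonempty v, rfl⟩ fun _ ⟨X, hX, hr⟩ => by
      obtain ⟨Y, -, hY, hYX⟩ := MetricGraph.exists_connected_subset_combRatio_le hX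
      have hαY := MetricGraph.alpha_le_of_connected hℓ hY
      rw [le_div_iff₀ hℓ] at hαY
      rw [hr]
      change _ ≤ Γ.combRatio X
      linarith
  rw [le_div_iff₀ hℓ]
  linarith
end

section
/- (Lemma 6.1, curvature lower bound) Suppose G carries an orientation such that K(v) > 0 for every v ∈ V. Then the isoperimetric constant satisfies α(G) ≥ inf_{v ∈ V} K(v). -/
open scoped Classical ENNReal
open MeasureTheory

/-! Write `κ = inf_v K(v)` and, for a finite subgraph `F`, let `out_F(v)`, `in_F(v)` count the
edges of `F` leaving and entering `v`. On an outgoing edge `e` of `v` one has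
`K(v) |e| ≤ K_comb(v)`, so grouping the edges of `F` by their initial vertex gives
`κ · mes F ≤ Σ_v out_F(v) K_comb(v)`. At an interior vertex of `F` all edges at `v` lie in `F`,
so the summand is `out_F(v) - in_F(v)`; at a boundary vertex it is at most
`out_F(v) ≤ out_F(v) - in_F(v) + deg_F(v)`. Since `Σ_v (out_F(v) - in_F(v)) = 0`, the sum is
at most `deg(∂F)`. -/

namespace MetricGraph

open Finset

variable (Γ : MetricGraph)

noncomputable def outDegIn (F : Finset Γ.E) (v : Γ.V) : ℕ := #{e ∈ F | (Γ.ends e).1 = v}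

noncomputable def inDegIn (F : Finset Γ.E) (v : Γ.V) : ℕ := #{e ∈ F | (Γ.ends e).2 = v}

variable {Γ}

lemma plusE_finite (v : Γ.V) : (Γ.plusE v).Finite :=
  (Γ.locfin v).subset fun _ he => Or.inl he

lemma ncard_plusE_ne_zero {v : Γ.V} (hv : (Γ.plusE v).Nonempty) :
    ((Γ.plusE v).ncard : ℝ) ≠ 0 :=
  Nat.cast_ne_zero.2 ((Set.ncard_pos (plusE_finite v)).2 hv).ne'

lemma Kcomb_le_one (v : Γ.V) : Γ.Kcomb v ≤ 1 :=
  sub_le_self _ (by positivity)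

lemma Kcurv_eq_Kcomb_mul {v : Γ.V} (hv : (Γ.plusE v).Nonempty) :
    Γ.Kcurv v = Γ.Kcomb v * sInf ((fun e => 1 / Γ.len e) '' Γ.plusE v) := by
  rw [Kcurv, Kcomb, sub_div, div_self (ncard_plusE_ne_zero hv)]

lemma Kcurv_mul_len_le_Kcomb {v : Γ.V} {e : Γ.E} (hK : 0 < Γ.Kcurv v)
    (he : e ∈ Γ.plusE v) : Γ.Kcurv v * Γ.len e ≤ Γ.Kcomb v := by
  set S := (fun e => 1 / Γ.len e) '' Γ.plusE v
  have hS : S.Finite := (plusE_finite v).image _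
  obtain ⟨e', -, hIe'⟩ : sInf S ∈ S := (Set.nonempty_of_mem he).image _ |>.csInf_mem hS
  have hI : 0 < sInf S := hIe' ▸ one_div_pos.2 (Γ.len_pos e')
  have hIe : sInf S * Γ.len e ≤ 1 :=
    (le_div_iff₀ (Γ.len_pos e)).1 (csInf_le hS.bddBelow ⟨e, he, rfl⟩)
  rw [Kcurv_eq_Kcomb_mul ⟨e, he⟩] at hK ⊢
  have hc : 0 < Γ.Kcomb v := pos_of_mul_pos_left hK hI.le
  calc Γ.Kcomb v * sInf S * Γ.len e = Γ.Kcomb v * (sInf S * Γ.len e) := mul_assoc ..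
    _ ≤ Γ.Kcomb v := mul_le_of_le_one_right hc.le hIe

lemma fst_mem_vertsOf {F : Finset Γ.E} {e : Γ.E} (he : e ∈ F) : (Γ.ends e).1 ∈ Γ.vertsOf F :=
  mem_union_left _ (mem_image_of_mem _ he)

lemma snd_mem_vertsOf {F : Finset Γ.E} {e : Γ.E} (he : e ∈ F) : (Γ.ends e).2 ∈ Γ.vertsOf F :=
  mem_union_right _ (mem_image_of_mem _ he)

lemma sum_outDegIn (F : Finset Γ.E) : ∑ v ∈ Γ.vertsOf F, Γ.outDegIn F v = #F :=
  (card_eq_sum_card_fiberwise fun _ he => fst_mem_vertsOf he).symm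

lemma sum_inDegIn (F : Finset Γ.E) : ∑ v ∈ Γ.vertsOf F, Γ.inDegIn F v = #F :=
  (card_eq_sum_card_fiberwise fun _ he => snd_mem_vertsOf he).symm

lemma inDegIn_le_degIn (F : Finset Γ.E) (v : Γ.V) : Γ.inDegIn F v ≤ Γ.degIn F v :=
  card_le_card <| monotone_filter_right _ fun _ _ => Or.inr

lemma star_subset_of_degree_le {F : Finset Γ.E} {v : Γ.V} (hv : Γ.degree v ≤ Γ.degIn F v) :
    Γ.star v ⊆ F := by
  have hsub : {e ∈ F | (Γ.ends e).1 = v ∨ (Γ.ends e).2 = v} ⊆ (Γ.locfin v).toFinset :=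
    fun e he => (Γ.locfin v).mem_toFinset.2 (mem_filter.1 he).2
  have hstar := eq_of_subset_of_card_le hsub hv
  intro e he
  exact (mem_filter.1 (hstar ▸ (Γ.locfin v).mem_toFinset.2 he)).1

lemma outDegIn_eq_ncard_plusE {F : Finset Γ.E} {v : Γ.V} (hv : Γ.star v ⊆ F) :
    Γ.outDegIn F v = (Γ.plusE v).ncard := by
  rw [outDegIn, ← Set.ncard_coe_finset, coe_filter]
  congr 1
  ext e
  exact ⟨fun he => he.2, fun he => ⟨hv (Or.inl he), he⟩⟩

lemma inDegIn_eq_ncard_minusE {F : Finset Γ.E} {v : Γ.V} (hv : Γ.star v ⊆ F) :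
    Γ.inDegIn F v = (Γ.minusE v).ncard := by
  rw [inDegIn, ← Set.ncard_coe_finset, coe_filter]
  congr 1
  ext e
  exact ⟨fun he => he.2, fun he => ⟨hv (Or.inr he), he⟩⟩

lemma outDegIn_mul_Kcomb_le (F : Finset Γ.E) {v : Γ.V} (hv : (Γ.plusE v).Nonempty) :
    Γ.outDegIn F v * Γ.Kcomb v ≤ (Γ.outDegIn F v : ℝ) - Γ.inDegIn F v +
      if Γ.degIn F v < Γ.degree v then (Γ.degIn F v : ℝ) else 0 := by
  split_ifs with hbd
  · have hin : (Γ.inDegIn F v : ℝ) ≤ Γ.degIn F v := Nat.cast_le.2 (inDegIn_le_degIn F v)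
    have hK : (Γ.outDegIn F v : ℝ) * Γ.Kcomb v ≤ Γ.outDegIn F v :=
      mul_le_of_le_one_right (Nat.cast_nonneg _) (Kcomb_le_one v)
    linarith
  · have hstar := star_subset_of_degree_le (not_lt.1 hbd)
    rw [outDegIn_eq_ncard_plusE hstar, inDegIn_eq_ncard_minusE hstar, Kcomb, mul_one_sub,
      mul_div_cancel₀ _ (ncard_plusE_ne_zero hv), add_zero]

lemma sum_outDegIn_mul_Kcomb_le_degBdry (F : Finset Γ.E)
    (hF : ∀ v ∈ Γ.vertsOf F, (Γ.plusE v).Nonempty) :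
    ∑ v ∈ Γ.vertsOf F, Γ.outDegIn F v * Γ.Kcomb v ≤ Γ.degBdry F := by
  have hsum : ∑ v ∈ Γ.vertsOf F, ((Γ.outDegIn F v : ℝ) - Γ.inDegIn F v) = 0 := by
    rw [sum_sub_distrib, ← Nat.cast_sum, ← Nat.cast_sum, sum_outDegIn, sum_inDegIn, sub_self]
  calc ∑ v ∈ Γ.vertsOf F, Γ.outDegIn F v * Γ.Kcomb v
      ≤ ∑ v ∈ Γ.vertsOf F, ((Γ.outDegIn F v : ℝ) - Γ.inDegIn F v +
          if Γ.degIn F v < Γ.degree v then (Γ.degIn F v : ℝ) else 0) :=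
        sum_le_sum fun v hv => outDegIn_mul_Kcomb_le F (hF v hv)
    _ = Γ.degBdry F := by rw [sum_add_distrib, hsum, zero_add, ← sum_filter]; rfl

lemma mul_mes_le_sum_outDegIn_mul_Kcomb (F : Finset Γ.E) {κ : ℝ} (hK : ∀ v, 0 < Γ.Kcurv v)
    (hκ : ∀ v, κ ≤ Γ.Kcurv v) :
    κ * Γ.mes F ≤ ∑ v ∈ Γ.vertsOf F, Γ.outDegIn F v * Γ.Kcomb v := by
  have hedge : ∀ e, κ * Γ.len e ≤ Γ.Kcomb (Γ.ends e).1 := fun e =>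
    (mul_le_mul_of_nonneg_right (hκ _) (Γ.len_pos e).le).trans
      (Kcurv_mul_len_le_Kcomb (hK _) rfl)
  calc κ * Γ.mes F ≤ ∑ e ∈ F, Γ.Kcomb (Γ.ends e).1 := by
        rw [mes, mul_sum]
        exact sum_le_sum fun e _ => hedge e
    _ = ∑ v ∈ Γ.vertsOf F, ∑ e ∈ F with (Γ.ends e).1 = v, Γ.Kcomb v := by
        rw [← sum_fiberwise_of_maps_to fun _ he => fst_mem_vertsOf he]
        refine sum_congr rfl fun v _ => sum_congr rfl fun e he => ?_
        rw [(mem_filter.1 he).2]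
    _ = ∑ v ∈ Γ.vertsOf F, Γ.outDegIn F v * Γ.Kcomb v := by
        simp only [sum_const, nsmul_eq_mul, outDegIn]

lemma isFinSubgraph_singleton (e : Γ.E) : Γ.IsFinSubgraph {e} := by
  refine ⟨singleton_nonempty e, ?_⟩
  set a : (Γ.vertsOf {e} : Set Γ.V) := ⟨_, fst_mem_vertsOf (mem_singleton_self e)⟩
  have hreach : ∀ x, (((SimpleGraph.fromRel fun u v => ∃ e' ∈ ({e} : Finset Γ.E),
      Γ.ends e' = (u, v)).induce (Γ.vertsOf {e} : Set Γ.V)).Reachable a x) := by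
    rintro ⟨x, hx⟩
    obtain rfl | rfl : x = (Γ.ends e).1 ∨ x = (Γ.ends e).2 := by simpa [vertsOf] using hx
    · rfl
    · exact SimpleGraph.Adj.reachable ⟨Γ.no_loops e, Or.inl ⟨e, mem_singleton_self e, rfl⟩⟩
  have : Nonempty (Γ.vertsOf {e} : Set Γ.V) := ⟨a⟩
  exact ⟨fun x y => (hreach x).symm.trans (hreach y)⟩

lemma mul_mes_le_degBdry (F : Finset Γ.E) {κ : ℝ}
    (h : ∀ v : Γ.V, (Γ.plusE v).Nonempty ∧ 0 < Γ.Kcurv v) (hκ : ∀ v, κ ≤ Γ.Kcurv v) :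
    κ * Γ.mes F ≤ Γ.degBdry F :=
  (mul_mes_le_sum_outDegIn_mul_Kcomb F (fun v => (h v).2) hκ).trans
    (sum_outDegIn_mul_Kcomb_le_degBdry F fun v _ => (h v).1)

end MetricGraph

/-- **Lemma 6.1 (curvature lower bound).** If `K(v) > 0` for every vertex `v`
(in particular `E_v⁺ ≠ ∅`), then `α(G) ≥ inf_v K(v)`. -/
theorem alpha_ge_inf_curvature (Γ : MetricGraph)
    (h : ∀ v : Γ.V, (Γ.plusE v).Nonempty ∧ 0 < Γ.Kcurv v) :
    sInf (Set.range Γ.Kcurv) ≤ Γ.alpha := by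
  have hκ : ∀ v, sInf (Set.range Γ.Kcurv) ≤ Γ.Kcurv v := fun v =>
    csInf_le ⟨0, Set.forall_mem_range.2 fun v => (h v).2.le⟩ ⟨v, rfl⟩
  obtain ⟨e⟩ := @Infinite.nonempty _ Γ.infE
  -- `sInf ∅ = 0` in `ℝ`, so the set defining `α` must be shown nonempty.
  refine le_csInf ⟨_, {e}, MetricGraph.isFinSubgraph_singleton e, rfl⟩ ?_
  rintro _ ⟨F, ⟨hF, -⟩, rfl⟩
  have hmes : 0 < Γ.mes F := Finset.sum_pos (fun e _ => Γ.len_pos e) hF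
  exact (le_div_iff₀ hmes).2 (MetricGraph.mul_mes_le_degBdry F h hκ)
end
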